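/- Let α ∈ ℂ, let A, X be complex p×q matrices with range(A) ⊆ range(X) and null(A) ⊆ null(X), and let z ∈ ℂ with z ≠ α. Then ((z−α)X + A)·(−(z−α)A⁺X + I_q − A⁺A)^{-1} = −A·(I_q + (z−α)^{-1}X⁺A). Moreover, the range of this matrix is contained in range(A) and null(A) is contained in its null space. -/

import Mathlib

open Matrix

/-- `Ap` is the Moore-Penrose inverse of `A`. -/
def IsMoorePenrose {p q : ℕ} (A : Matrix (Fin p) (Fin q) ℂ)
    (Ap : Matrix (Fin q) (Fin p) ℂ) : Prop :=
  A * Ap * A = A ∧ Ap * A * Ap = Ap ∧ (A * Ap)ᴴ = A * Ap ∧ (Ap * A)ᴴ = Ap * A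

/-!
With `P = A⁺A` (the projection onto the row space of `A`), the two range/null-space inclusions
give `X X⁺ A = A` and `X P = X`, and self-adjointness of `P` and `X⁺X` turns the latter into
`P X⁺ = X⁺`. These identities make `1 - P - w⁻¹ X⁺A` a right inverse of `1 - P - w A⁺X`
(`w = z - α`), and multiplying `w X + A` by it leaves `-A (1 + w⁻¹ X⁺A)`, which factors through
`A` on both sides.
-/

namespace Matrix

theorem mul_mul_eq_right_of_range_le {l m n R : Type*} [Fintype l] [Fintype m] [Fintype n] [DecidableEq n]
    [CommRing R] {A : Matrix m n R} {X : Matrix m l R} {Xg : Matrix l m R}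
    (hX : X * Xg * X = X) (hran : LinearMap.range A.mulVecLin ≤ LinearMap.range X.mulVecLin) :
    X * Xg * A = A := by
  refine ext_of_mulVec_single fun i => ?_
  obtain ⟨u, hu⟩ := hran ⟨Pi.single i 1, rfl⟩
  simp only [mulVecLin_apply] at hu
  rw [← mulVec_mulVec, ← hu, mulVec_mulVec, hX]

theorem mul_mul_eq_left_of_ker_le {l m n R : Type*} [Fintype m] [Fintype n] [DecidableEq n]
    [CommRing R] {A : Matrix m n R} {Ag : Matrix n m R} {X : Matrix l n R}
    (hA : A * Ag * A = A) (hker : LinearMap.ker A.mulVecLin ≤ LinearMap.ker X.mulVecLin) :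
    X * Ag * A = X := by
  refine ext_of_mulVec_single fun i => ?_
  have hA0 : A *ᵥ (Pi.single i 1 - (Ag * A) *ᵥ Pi.single i 1) = 0 := by
    rw [mulVec_sub, mulVec_mulVec, ← Matrix.mul_assoc, hA, sub_self]
  have hX0 : X *ᵥ (Pi.single i 1 - (Ag * A) *ᵥ Pi.single i 1) = 0 := hker hA0
  rw [mulVec_sub, sub_eq_zero, mulVec_mulVec, ← Matrix.mul_assoc] at hX0
  exact hX0.symm

theorem mul_mul_eq_right_of_conjTranspose_eq {m n R : Type*} [Fintype m] [Fintype n]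
    [CommRing R] [StarRing R]
    {A X : Matrix m n R} {Ag Xg : Matrix n m R}
    (hAg : (Ag * A)ᴴ = Ag * A) (hXg : (Xg * X)ᴴ = Xg * X) (hXgX : Xg * X * Xg = Xg)
    (hXAgA : X * Ag * A = X) :
    Ag * A * Xg = Xg := by
  have h : Xg * X * (Ag * A) = Xg * X := by
    rw [Matrix.mul_assoc, ← Matrix.mul_assoc X, hXAgA]
  have h' : Ag * A * (Xg * X) = Xg * X := by
    simpa only [conjTranspose_mul, hAg, hXg] using congrArg conjTranspose h
  rw [← hXgX, ← Matrix.mul_assoc, ← Matrix.mul_assoc, Matrix.mul_assoc (Ag * A), h', hXgX]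

theorem neg_smul_mul_add_one_sub_mul_mul_eq_one {m n K : Type*} [Fintype m] [Fintype n]
    [DecidableEq n] [Field K] {A X : Matrix m n K} {Ag Xg : Matrix n m K} {w : K} (hw : w ≠ 0)
    (hA : A * Ag * A = A) (hXAgA : X * Ag * A = X) (hXXgA : X * Xg * A = A)
    (hAgAXg : Ag * A * Xg = Xg) :
    (-w • (Ag * X) + 1 - Ag * A) * (1 - Ag * A - w⁻¹ • (Xg * A)) = 1 := by
  have hP : Ag * A * (Ag * A) = Ag * A := by rw [Matrix.mul_assoc, ← Matrix.mul_assoc A, hA]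
  have hPXgA : Ag * A * (Xg * A) = Xg * A := by rw [← Matrix.mul_assoc, hAgAXg]
  have hAgXP : Ag * X * (Ag * A) = Ag * X := by
    rw [Matrix.mul_assoc, ← Matrix.mul_assoc X, hXAgA]
  have hAgXXgA : Ag * X * (Xg * A) = Ag * A := by
    rw [Matrix.mul_assoc, ← Matrix.mul_assoc X, hXXgA]
  simp only [add_mul, sub_mul, mul_sub, mul_one, one_mul, smul_mul_assoc, mul_smul_comm,
    hP, hPXgA, hAgXP, hAgXXgA]
  match_scalars <;> field_simp <;> ring

theorem smul_add_mul_one_sub_mul_sub_smul_mul {m n K : Type*} [Fintype m] [Fintype n]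
    [DecidableEq n] [Field K] {A X : Matrix m n K} {Ag Xg : Matrix n m K} {w : K} (hw : w ≠ 0)
    (hA : A * Ag * A = A) (hXAgA : X * Ag * A = X) (hXXgA : X * Xg * A = A) :
    (w • X + A) * (1 - Ag * A - w⁻¹ • (Xg * A)) = -(A * (1 + w⁻¹ • (Xg * A))) := by
  have hXP : X * (Ag * A) = X := by rw [← Matrix.mul_assoc, hXAgA]
  have hXXgA' : X * (Xg * A) = A := by rw [← Matrix.mul_assoc, hXXgA]
  have hAP : A * (Ag * A) = A := by rw [← Matrix.mul_assoc, hA]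
  simp only [Matrix.add_mul, Matrix.mul_sub, Matrix.mul_add, Matrix.mul_one, Matrix.smul_mul, Matrix.mul_smul, hXP, hXXgA',
    hAP]
  match_scalars <;> field_simp <;> ring

theorem range_mulVecLin_mul_le {l m n R : Type*} [Fintype m] [Fintype n] [CommRing R]
    (A : Matrix l m R) (B : Matrix m n R) :
    LinearMap.range (A * B).mulVecLin ≤ LinearMap.range A.mulVecLin := by
  rw [mulVecLin_mul]
  exact LinearMap.range_comp_le_range _ _

theorem ker_mulVecLin_le_mul {l m n R : Type*} [Fintype m] [Fintype n] [CommRing R]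
    (A : Matrix l m R) (B : Matrix m n R) :
    LinearMap.ker B.mulVecLin ≤ LinearMap.ker (A * B).mulVecLin := by
  rw [mulVecLin_mul]
  exact LinearMap.ker_le_ker_comp _ _

end Matrix

theorem stmt7 {p q : ℕ} (α : ℂ) (A X : Matrix (Fin p) (Fin q) ℂ)
    (Ap Xp : Matrix (Fin q) (Fin p) ℂ)
    (hA : IsMoorePenrose A Ap) (hX : IsMoorePenrose X Xp)
    (hran : LinearMap.range A.mulVecLin ≤ LinearMap.range X.mulVecLin)
    (hker : LinearMap.ker A.mulVecLin ≤ LinearMap.ker X.mulVecLin)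
    (z : ℂ) (hz : z ≠ α) :
    ((z - α) • X + A) * ((-(z - α)) • (Ap * X) + 1 - Ap * A)⁻¹
        = -(A * (1 + (z - α)⁻¹ • (Xp * A))) ∧
    LinearMap.range (((z - α) • X + A) * ((-(z - α)) • (Ap * X) + 1 - Ap * A)⁻¹).mulVecLin
        ≤ LinearMap.range A.mulVecLin ∧
    LinearMap.ker A.mulVecLin
        ≤ LinearMap.ker (((z - α) • X + A) * ((-(z - α)) • (Ap * X) + 1 - Ap * A)⁻¹).mulVecLin := by
  obtain ⟨hAApA, -, -, hApA⟩ := hA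
  obtain ⟨hXXpX, hXpXXp, -, hXpX⟩ := hX
  have hw : z - α ≠ 0 := sub_ne_zero.mpr hz
  have hXXpA := mul_mul_eq_right_of_range_le hXXpX hran
  have hXApA := mul_mul_eq_left_of_ker_le hAApA hker
  have hApAXp := mul_mul_eq_right_of_conjTranspose_eq hApA hXpX hXpXXp hXApA
  have hprod : ((z - α) • X + A) * ((-(z - α)) • (Ap * X) + 1 - Ap * A)⁻¹
      = -(A * (1 + (z - α)⁻¹ • (Xp * A))) := by
    rw [inv_eq_right_inv (neg_smul_mul_add_one_sub_mul_mul_eq_one hw hAApA hXApA hXXpA hApAXp)]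
    exact smul_add_mul_one_sub_mul_sub_smul_mul hw hAApA hXApA hXXpA
  have hright : -(A * (1 + (z - α)⁻¹ • (Xp * A))) = A * -(1 + (z - α)⁻¹ • (Xp * A)) :=
    (Matrix.mul_neg _ _).symm
  have hleft : -(A * (1 + (z - α)⁻¹ • (Xp * A))) = -(1 + (z - α)⁻¹ • (A * Xp)) * A := by
    simp only [Matrix.mul_add, Matrix.add_mul, Matrix.mul_one, Matrix.one_mul, Matrix.mul_smul, Matrix.smul_mul,
      Matrix.mul_assoc, Matrix.neg_mul]
  refine ⟨hprod, ?_, ?_⟩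
  · rw [hprod, hright]
    exact range_mulVecLin_mul_le _ _
  · rw [hprod, hleft]
    exact ker_mulVecLin_le_mul _ _
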